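/- The Post Correspondence Problem reduces (many-one, computably) to the following problem about deducibility in a rule system: given finite alphabets, strings s₁,…,sₙ and t₁,…,tₙ, there exist indices i₁,…,i_k ∈ {1,…,n} with s_{i₁}·…·s_{i_k} = t_{i₁}·…·t_{i_k} if and only if the term G(g,g) is derivable for some closed grant g in the inductively defined derivation system with axioms G(G_{s_i}(Pr), G_{t_i}(Pr)) for i = 1,…,n and rule 'from G(g₁, g₂) derive G(G_{s_i}(g₁), G_{t_i}(g₂)) for each i'. Consequently the derivability question is undecidable. -/

import Mathlib

/- Terms freely generated by a constant `pr`, one unary constructor `gs σ` per symbol `σ`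
of the alphabet, and a binary constructor `G`. -/
inductive Tm (σ : Type) where
  | pr : Tm σ
  | gs : σ → Tm σ → Tm σ
  | G : Tm σ → Tm σ → Tm σ

/-- `Gstr s u` is the composition `G_{σ₁}(…(G_{σ_m}(u))…)` for the string `s = σ₁…σ_m`. -/
def Gstr {σ : Type} : List σ → Tm σ → Tm σ
  | [], u => u
  | a :: s, u => Tm.gs a (Gstr s u)

/-- The derivation system with axioms `G(G_{sᵢ}(Pr), G_{tᵢ}(Pr))` and closure rule
"from `G(u, v)` derive `G(G_{sᵢ}(u), G_{tᵢ}(v))`", for each pair `(sᵢ, tᵢ)`. -/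
inductive Deriv {σ : Type} (pairs : List (List σ × List σ)) : Tm σ → Prop
  | ax {s t : List σ} : (s, t) ∈ pairs → Deriv pairs (Tm.G (Gstr s Tm.pr) (Gstr t Tm.pr))
  | step {s t : List σ} {u v : Tm σ} : (s, t) ∈ pairs → Deriv pairs (Tm.G u v) →
      Deriv pairs (Tm.G (Gstr s u) (Gstr t v))

/-! Along any derivation the two components of the derived term are `G_a(Pr)` and `G_b(Pr)`,
where `a` and `b` are the two concatenations over the sequence of pairs used so far (most
recent first). Since `a ↦ G_a(Pr)` is injective, `G(g, g)` is derivable exactly when some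
nonempty sequence of pairs has equal concatenations. -/

theorem Gstr_append {σ : Type} (a b : List σ) (u : Tm σ) :
    Gstr (a ++ b) u = Gstr a (Gstr b u) := by
  induction a with
  | nil => rfl
  | cons x a ih => simp only [List.cons_append, Gstr, ih]

theorem Gstr_pr_injective {σ : Type} : Function.Injective (Gstr · (Tm.pr : Tm σ))
  | [], [], _ => rfl
  | [], _ :: _, h => nomatch h
  | _ :: _, [], h => nomatch h
  | x :: a, y :: b, h => by
      obtain ⟨rfl, hab⟩ := Tm.gs.inj h
      rw [Gstr_pr_injective hab]

def concatTerm {σ : Type} (l : List (List σ × List σ)) : Tm σ :=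
  Tm.G (Gstr (l.map Prod.fst).flatten Tm.pr) (Gstr (l.map Prod.snd).flatten Tm.pr)

theorem concatTerm_cons {σ : Type} (s t : List σ) (l : List (List σ × List σ)) :
    concatTerm ((s, t) :: l) =
      Tm.G (Gstr s (Gstr (l.map Prod.fst).flatten Tm.pr))
        (Gstr t (Gstr (l.map Prod.snd).flatten Tm.pr)) := by
  simp only [concatTerm, List.map_cons, List.flatten_cons, Gstr_append]

theorem exists_concatTerm_eq_G_self_iff {σ : Type} (l : List (List σ × List σ)) :
    (∃ g, concatTerm l = Tm.G g g) ↔ (l.map Prod.fst).flatten = (l.map Prod.snd).flatten := by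
  simp [concatTerm, Gstr_pr_injective.eq_iff, eq_comm]

theorem deriv_concatTerm {σ : Type} {pairs : List (List σ × List σ)} :
    ∀ {l : List (List σ × List σ)}, l ≠ [] → (∀ p ∈ l, p ∈ pairs) →
      Deriv pairs (concatTerm l)
  | [(s, t)], _, hl => by
      simpa [concatTerm_cons, Gstr] using Deriv.ax (hl (s, t) (List.mem_singleton_self _))
  | (s, t) :: q :: l, _, hl => by
      rw [concatTerm_cons]
      exact Deriv.step (hl _ List.mem_cons_self)
        (deriv_concatTerm (List.cons_ne_nil q l) fun p hp => hl p (List.mem_cons_of_mem _ hp))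

theorem Deriv.exists_eq_concatTerm {σ : Type} {pairs : List (List σ × List σ)} {u : Tm σ}
    (h : Deriv pairs u) :
    ∃ l : List (List σ × List σ), l ≠ [] ∧ (∀ p ∈ l, p ∈ pairs) ∧ concatTerm l = u := by
  induction h with
  | @ax s t hst =>
      exact ⟨[(s, t)], List.cons_ne_nil _ _, by simpa using hst, by simp [concatTerm_cons, Gstr]⟩
  | @step s t u v hst _ ih =>
      obtain ⟨l, -, hl, hlu⟩ := ih
      obtain ⟨rfl, rfl⟩ := Tm.G.inj hlu
      exact ⟨(s, t) :: l, List.cons_ne_nil _ _, List.forall_mem_cons.mpr ⟨hst, hl⟩,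
        concatTerm_cons s t l⟩

/-- PCP reduction: the instance of the Post Correspondence Problem given by the pairs
`(sᵢ, tᵢ)` has a solution — a nonempty index sequence with equal concatenations — if and only
if `G(g, g)` is derivable for some closed grant (term) `g` in the corresponding derivation
system.  (Since PCP is undecidable, derivability is undecidable; the map sending a PCP
instance to the corresponding derivability instance is the identity on the data, hence
computable, so this is a many-one reduction.) -/
theorem pcp_reduces_to_derivability {σ : Type} (pairs : List (List σ × List σ)) :
    (∃ l : List (List σ × List σ), l ≠ [] ∧ (∀ p ∈ l, p ∈ pairs) ∧
        (l.map Prod.fst).flatten = (l.map Prod.snd).flatten) ↔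
      (∃ g : Tm σ, Deriv pairs (Tm.G g g)) := by
  constructor
  · rintro ⟨l, hne, hl, heq⟩
    obtain ⟨g, hg⟩ := (exists_concatTerm_eq_G_self_iff l).mpr heq
    exact ⟨g, hg ▸ deriv_concatTerm hne hl⟩
  · rintro ⟨g, hg⟩
    obtain ⟨l, hne, hl, hlg⟩ := hg.exists_eq_concatTerm
    exact ⟨l, hne, hl, (exists_concatTerm_eq_G_self_iff l).mp ⟨g, hlg⟩⟩
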